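/- Let x* = γ e_j be the minimizer of J(x) = ½‖P x − P e_j‖₂² + α‖W x‖₁ with γ = 1 − α/[W⁻¹ P e_j]_j, 0 < α < [W⁻¹ P e_j]_j. Then for every y ∈ ℝⁿ with y not a scalar multiple of e_j, J(y) > J(x*). -/

import Mathlib

/-!
Write `pᵢ = P eᵢ` and `wᵢ = ‖pᵢ‖`. Since `Pᵀ P = P`, `[W⁻¹ P e_j]_j = P_jj / w_j = w_j`, so
`γ = 1 - α / w_j`, i.e. `α = (1 - γ) w_j`. Expanding the square around `γ p_j` gives, for any
matrix and any `γ ≥ 0`, the exact identity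
  `J y = J (γ e_j) + ½ ‖P y - γ p_j‖² + (1 - γ) ∑ᵢ (wᵢ w_j |yᵢ| - yᵢ ⟪pᵢ, p_j⟫)`.
By Cauchy–Schwarz every summand is nonnegative, and it is positive at any `i ≠ j` with `yᵢ ≠ 0`
because `pᵢ` and `p_j` are not parallel.
-/

open Matrix Finset

noncomputable def enorm₂ {n : ℕ} (v : Fin n → ℝ) : ℝ := Real.sqrt (∑ i, v i ^ 2)

noncomputable def wInvP {n : ℕ} (P : Matrix (Fin n) (Fin n) ℝ) (j i : Fin n) : ℝ :=
  P.mulVec (Pi.single j 1) i / enorm₂ (P.mulVec (Pi.single i 1))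

noncomputable def Jfun {n : ℕ} (P : Matrix (Fin n) (Fin n) ℝ) (j : Fin n) (α : ℝ)
    (x : Fin n → ℝ) : ℝ :=
  (1 / 2) * ∑ k, (P.mulVec x k - P.mulVec (Pi.single j 1) k) ^ 2 +
    α * ∑ i, enorm₂ (P.mulVec (Pi.single i 1)) * |x i|

theorem enorm₂_eq_norm {n : ℕ} (v : Fin n → ℝ) : enorm₂ v = ‖WithLp.toLp 2 v‖ := by
  simp [enorm₂, EuclideanSpace.norm_eq]

theorem dotProduct_eq_inner {n : ℕ} (u v : Fin n → ℝ) :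
    u ⬝ᵥ v = inner ℝ (WithLp.toLp 2 u) (WithLp.toLp 2 v) := by
  simp [EuclideanSpace.inner_toLp_toLp, dotProduct_comm]

theorem enorm₂_sq {n : ℕ} (v : Fin n → ℝ) : enorm₂ v ^ 2 = v ⬝ᵥ v := by
  rw [enorm₂_eq_norm, dotProduct_eq_inner, real_inner_self_eq_norm_sq]

theorem abs_dotProduct_le {n : ℕ} (u v : Fin n → ℝ) : |u ⬝ᵥ v| ≤ enorm₂ u * enorm₂ v := by
  rw [enorm₂_eq_norm, enorm₂_eq_norm, dotProduct_eq_inner]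
  exact abs_real_inner_le_norm _ _

theorem abs_dotProduct_lt {n : ℕ} {u v : Fin n → ℝ} (hu : u ≠ 0) (huv : ∀ c : ℝ, v ≠ c • u) :
    |u ⬝ᵥ v| < enorm₂ u * enorm₂ v := by
  refine (abs_dotProduct_le u v).lt_of_ne fun h => ?_
  rw [enorm₂_eq_norm, enorm₂_eq_norm, dotProduct_eq_inner, ← Real.norm_eq_abs] at h
  obtain hu0 | ⟨c, hc⟩ := ((norm_inner_eq_norm_tfae ℝ _ _).out 0 2).1 h
  · exact hu (by simpa using hu0)
  · exact huv c (by simpa using congrArg WithLp.ofLp hc)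

theorem mulVec_dotProduct_eq_sum {m n : ℕ} (P : Matrix (Fin m) (Fin n) ℝ) (y : Fin n → ℝ)
    (v : Fin m → ℝ) : P *ᵥ y ⬝ᵥ v = ∑ i, y i * (P.col i ⬝ᵥ v) := by
  rw [dotProduct_comm, dotProduct_mulVec, dotProduct]
  exact Finset.sum_congr rfl fun i _ => by rw [mul_comm, dotProduct_comm]; rfl

theorem wInvP_self_eq_enorm₂ {n : ℕ} {P : Matrix (Fin n) (Fin n) ℝ} (hP : Pᵀ * P = P) (j : Fin n) :
    wInvP P j j = enorm₂ (P.col j) := by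
  have hjj : P j j = enorm₂ (P.col j) ^ 2 := by
    rw [enorm₂_sq]
    conv_lhs => rw [← hP]
    rfl
  rw [wInvP, mulVec_single_one, col_apply, hjj, sq, mul_self_div_self]

theorem Jfun_eq {n : ℕ} (P : Matrix (Fin n) (Fin n) ℝ) (j : Fin n) (α : ℝ) (x : Fin n → ℝ) :
    Jfun P j α x = 1 / 2 * enorm₂ (P *ᵥ x - P.col j) ^ 2 + α * ∑ i, enorm₂ (P.col i) * |x i| := by
  rw [Jfun, enorm₂, Real.sq_sqrt (by positivity)]
  simp

theorem Jfun_smul_single {n : ℕ} (P : Matrix (Fin n) (Fin n) ℝ) (j : Fin n) (α : ℝ) {γ : ℝ}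
    (hγ : 0 ≤ γ) :
    Jfun P j α (γ • Pi.single j 1) =
      1 / 2 * (γ - 1) ^ 2 * enorm₂ (P.col j) ^ 2 + α * γ * enorm₂ (P.col j) := by
  have hweights : ∑ i, enorm₂ (P.col i) * |(γ • Pi.single j 1 : Fin n → ℝ) i| =
      γ * enorm₂ (P.col j) := by
    rw [Fintype.sum_eq_single j fun i hi => by simp [hi]]
    simp [abs_of_nonneg hγ, mul_comm]
  rw [Jfun_eq, hweights, mulVec_smul, mulVec_single_one, enorm₂_sq, enorm₂_sq]
  simp only [sub_dotProduct, dotProduct_sub, smul_dotProduct, dotProduct_smul, smul_eq_mul]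
  ring

theorem Jfun_eq_Jfun_smul_single_add {n : ℕ} (P : Matrix (Fin n) (Fin n) ℝ) (j : Fin n)
    {α γ : ℝ} (hγ : 0 ≤ γ) (hα : α = (1 - γ) * enorm₂ (P.col j)) (y : Fin n → ℝ) :
    Jfun P j α y = Jfun P j α (γ • Pi.single j 1) + 1 / 2 * enorm₂ (P *ᵥ y - γ • P.col j) ^ 2 +
      (1 - γ) * ∑ i, (enorm₂ (P.col i) * enorm₂ (P.col j) * |y i| - y i * (P.col i ⬝ᵥ P.col j)) := by
  rw [Jfun_eq P j α y, Jfun_smul_single P j α hγ]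
  have hweights : ∑ i, enorm₂ (P.col i) * enorm₂ (P.col j) * |y i| =
      enorm₂ (P.col j) * ∑ i, enorm₂ (P.col i) * |y i| := by
    rw [Finset.mul_sum]
    exact Finset.sum_congr rfl fun i _ => by ring
  subst hα
  simp only [enorm₂_sq, sub_dotProduct, dotProduct_sub, smul_dotProduct, dotProduct_smul, smul_eq_mul,
    Finset.sum_sub_distrib, hweights, mulVec_dotProduct_eq_sum, dotProduct_comm (P.col j)]
  linear_combination (γ ^ 2 - γ) * enorm₂_sq (P.col j)

theorem mul_dotProduct_le {n : ℕ} (t : ℝ) (u v : Fin n → ℝ) :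
    t * (u ⬝ᵥ v) ≤ |t| * (enorm₂ u * enorm₂ v) :=
  calc t * (u ⬝ᵥ v) ≤ |t| * |u ⬝ᵥ v| := (le_abs_self _).trans_eq (abs_mul _ _)
    _ ≤ |t| * (enorm₂ u * enorm₂ v) := by gcongr; exact abs_dotProduct_le u v

theorem mul_dotProduct_lt {n : ℕ} {t : ℝ} {u v : Fin n → ℝ} (ht : t ≠ 0) (hu : u ≠ 0)
    (huv : ∀ c : ℝ, v ≠ c • u) : t * (u ⬝ᵥ v) < |t| * (enorm₂ u * enorm₂ v) :=
  calc t * (u ⬝ᵥ v) ≤ |t| * |u ⬝ᵥ v| := (le_abs_self _).trans_eq (abs_mul _ _)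
    _ < |t| * (enorm₂ u * enorm₂ v) := by gcongr; exact abs_dotProduct_lt hu huv

theorem exists_ne_apply_ne_zero_of_ne_smul_single {ι : Type*} [DecidableEq ι] {y : ι → ℝ} {j : ι}
    (hy : ∀ c : ℝ, y ≠ c • Pi.single j 1) : ∃ l, l ≠ j ∧ y l ≠ 0 := by
  by_contra! hzero
  refine hy (y j) (funext fun l => ?_)
  by_cases hl : l = j
  · simp [hl]
  · simp [hl, hzero l hl]

theorem sum_cauchySchwarz_gap_pos {ι : Type*} [Fintype ι] [DecidableEq ι] {n : ℕ}
    {u : ι → Fin n → ℝ} {j : ι} (hu : ∀ i, i ≠ j → u i ≠ 0)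
    (hpar : ∀ i, i ≠ j → ∀ c : ℝ, u j ≠ c • u i) {y : ι → ℝ}
    (hy : ∀ c : ℝ, y ≠ c • Pi.single j 1) :
    0 < ∑ i, (enorm₂ (u i) * enorm₂ (u j) * |y i| - y i * (u i ⬝ᵥ u j)) := by
  obtain ⟨l, hlj, hyl⟩ := exists_ne_apply_ne_zero_of_ne_smul_single hy
  refine Finset.sum_pos' (fun i _ => ?_) ⟨l, Finset.mem_univ l, ?_⟩
  · linarith [mul_dotProduct_le (y i) (u i) (u j)]
  · linarith [mul_dotProduct_lt hyl (hu l hlj) (hpar l hlj)]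

/-- With `γ = 1 − α/[W⁻¹ P e_j]_j`, `0 < α < [W⁻¹ P e_j]_j`, for every `y` which is
not a scalar multiple of `e_j`, `J(y) > J(γ • e_j)`. -/
theorem strict_decrease_off_axis {n : ℕ}
    (P : Matrix (Fin n) (Fin n) ℝ) (hsymm : Pᵀ = P) (hidem : P * P = P)
    (hnz : ∀ i : Fin n, P.mulVec (Pi.single i 1) ≠ 0)
    (j : Fin n)
    (hpar : ∀ i : Fin n, i ≠ j → ∀ c : ℝ,
      P.mulVec (Pi.single j 1) ≠ c • P.mulVec (Pi.single i 1))
    (α : ℝ) (hα0 : 0 < α) (hα1 : α < wInvP P j j) :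
    ∀ y : Fin n → ℝ, (∀ c : ℝ, y ≠ c • (Pi.single j 1 : Fin n → ℝ)) →
      Jfun P j α ((1 - α / wInvP P j j) • (Pi.single j 1 : Fin n → ℝ)) < Jfun P j α y := by
  intro y hy
  simp only [mulVec_single_one] at hnz hpar
  rw [wInvP_self_eq_enorm₂ (by rw [hsymm, hidem]) j] at hα1 ⊢
  set w := enorm₂ (P.col j)
  have hw : 0 < w := hα0.trans hα1
  have hγ : 0 ≤ 1 - α / w := sub_nonneg.2 ((div_le_one hw).2 hα1.le)
  rw [Jfun_eq_Jfun_smul_single_add P j hγ (by field_simp; ring) y]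
  have hgap := sum_cauchySchwarz_gap_pos (fun i _ => hnz i) hpar hy
  have hcoef : 0 < 1 - (1 - α / w) := by simpa using div_pos hα0 hw
  linarith [mul_pos hcoef hgap, sq_nonneg (enorm₂ (P *ᵥ y - (1 - α / w) • P.col j))]
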